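/- arXiv:1909.06914 — 3 statements merged into one kernel-verified Lean document; each statement's English description precedes it below -/
import Mathlib

section
/- For each N ≥ 1 define h_N: (0,∞) → R by h_N(x) = (s/√N)·∏_{j=1}^{s-1}(1 - j/N) for x ∈ ((s-1)/√N, s/√N], s = 1, 2, .... Then h_N(x) ≤ 4·max(x,1)·exp(-x²/2) for all x > 0. -/
open Real

/-- `h_N(x) = (s/√N) ∏_{j=1}^{s-1} (1 - j/N)` for `x ∈ ((s-1)/√N, s/√N]`,
i.e. with `s = ⌈√N x⌉`. -/
noncomputable def hN (N : ℕ) (x : ℝ) : ℝ :=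
  ((⌈Real.sqrt N * x⌉₊ : ℝ) / Real.sqrt N) *
    ∏ j ∈ Finset.Icc 1 (⌈Real.sqrt N * x⌉₊ - 1), (1 - (j : ℝ) / N)

/-!
Write `s = ⌈√N x⌉`. If `s > N` the product defining `h_N(x)` contains the factor `1 - N/N = 0`.
Otherwise all factors lie in `[0, 1]`, and `1 - t ≤ e^{-t}` bounds the product by
`e^{-(s-1)s/(2N)}`. Since `√N x ≤ s ≤ N`, the exponent is at least `x²/2 - 1/2`, and
`e^{1/2} ≤ 2`; the prefactor `s/√N < x + 1/√N` is at most `2 max(x, 1)`.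
-/

lemma sum_Icc_one_natCast (m : ℕ) : ∑ j ∈ Finset.Icc 1 m, (j : ℝ) = m * (m + 1) / 2 := by
  induction m with
  | zero => simp
  | succ n ih =>
    rw [Finset.sum_Icc_succ_top (by omega), ih]
    push_cast
    ring

lemma prod_Icc_one_sub_div_eq_zero {N m : ℕ} (hN : 0 < N) (hm : N ≤ m) :
    ∏ j ∈ Finset.Icc 1 m, (1 - (j : ℝ) / N) = 0 :=
  Finset.prod_eq_zero (i := N) (Finset.mem_Icc.2 ⟨hN, hm⟩) (by field_simp; ring)

lemma prod_Icc_one_sub_div_le_exp {N : ℕ} (hN : 0 < N) (m : ℕ) :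
    ∏ j ∈ Finset.Icc 1 m, (1 - (j : ℝ) / N) ≤ exp (-(m * (m + 1) / (2 * N))) := by
  rcases le_or_gt N m with hm | hm
  · rw [prod_Icc_one_sub_div_eq_zero hN hm]
    positivity
  have hfactor_nonneg : ∀ j ∈ Finset.Icc 1 m, 0 ≤ 1 - (j : ℝ) / N := by
    intro j hj
    have hjN : (j : ℝ) ≤ N := by exact_mod_cast (Finset.mem_Icc.1 hj).2.trans hm.le
    linarith [div_le_one_of_le₀ hjN (Nat.cast_nonneg N)]
  calc ∏ j ∈ Finset.Icc 1 m, (1 - (j : ℝ) / N)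
      ≤ ∏ j ∈ Finset.Icc 1 m, exp (-((j : ℝ) / N)) :=
        Finset.prod_le_prod hfactor_nonneg fun j _ => one_sub_le_exp_neg _
    _ = exp (-((∑ j ∈ Finset.Icc 1 m, (j : ℝ)) / N)) := by
        rw [← exp_sum, Finset.sum_div, Finset.sum_neg_distrib]
    _ = exp (-(m * (m + 1) / (2 * N))) := by
        rw [sum_Icc_one_natCast, div_div]

lemma exp_half_le_two : exp (1 / 2) ≤ 2 := by
  have := exp_bound_div_one_sub_of_interval (x := 1 / 2) (by norm_num) (by norm_num)
  norm_num at this ⊢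
  exact this

lemma exp_neg_le_two_mul_exp {N s x : ℝ} (hN : 0 < N) (hx : 0 ≤ x) (hxs : √N * x ≤ s)
    (hsN : s ≤ N) : exp (-((s - 1) * s / (2 * N))) ≤ 2 * exp (-x ^ 2 / 2) := by
  have hx2 : x ^ 2 ≤ s ^ 2 / N := by
    rw [le_div_iff₀ hN]
    have := pow_le_pow_left₀ (by positivity) hxs 2
    rwa [mul_pow, sq_sqrt hN.le, mul_comm] at this
  have hexponent : -((s - 1) * s / (2 * N)) ≤ 1 / 2 + -x ^ 2 / 2 := by
    have hsN' : s / N ≤ 1 := div_le_one_of_le₀ hsN hN.le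
    have : (s - 1) * s / (2 * N) = (s ^ 2 / N - s / N) / 2 := by field_simp
    rw [this]
    linarith
  calc exp (-((s - 1) * s / (2 * N)))
      ≤ exp (1 / 2) * exp (-x ^ 2 / 2) := by rw [← exp_add]; exact exp_le_exp.2 hexponent
    _ ≤ 2 * exp (-x ^ 2 / 2) := by gcongr; exact exp_half_le_two

lemma natCeil_div_sqrt_le {N : ℕ} (hN : 1 ≤ N) {x : ℝ} (hx : 0 ≤ x) :
    (⌈√N * x⌉₊ : ℝ) / √N ≤ 2 * max x 1 := by
  have hsqrt : 1 ≤ √(N : ℝ) := one_le_sqrt.2 (by exact_mod_cast hN)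
  rw [div_le_iff₀ (by positivity)]
  calc (⌈√N * x⌉₊ : ℝ) ≤ √N * x + 1 := (Nat.ceil_lt_add_one (by positivity)).le
    _ ≤ √N * max x 1 + √N * max x 1 := by
        gcongr
        · exact le_max_left _ _
        · nlinarith [le_max_right x 1]
    _ = 2 * max x 1 * √N := by ring

/-- `h_N(x) ≤ 4 max(x,1) e^{-x²/2}` for all `x > 0`. -/
theorem hN_bound (N : ℕ) (hN1 : 1 ≤ N) (x : ℝ) (hx : 0 < x) :
    hN N x ≤ 4 * max x 1 * Real.exp (-x ^ 2 / 2) := by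
  have hNpos : 0 < N := hN1
  set s := ⌈√N * x⌉₊ with hs
  have hs1 : 1 ≤ s := Nat.one_le_iff_ne_zero.2 <| by
    simpa [hs, Nat.ceil_eq_zero, not_le] using by positivity
  rcases le_or_gt s N with hsN | hsN
  · have hcast : ((s - 1 : ℕ) : ℝ) + 1 = s := by rw [Nat.cast_sub hs1]; ring
    have hexp : exp (-((s - 1 : ℕ) * ((s - 1 : ℕ) + 1) / (2 * N))) ≤ 2 * exp (-x ^ 2 / 2) := by
      rw [hcast, Nat.cast_sub hs1, Nat.cast_one]
      exact exp_neg_le_two_mul_exp (by positivity) hx.le (Nat.le_ceil _) (by exact_mod_cast hsN)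
    calc hN N x ≤ (s / √N) * exp (-((s - 1 : ℕ) * ((s - 1 : ℕ) + 1) / (2 * N))) :=
          mul_le_mul_of_nonneg_left (prod_Icc_one_sub_div_le_exp hNpos _) (by positivity)
      _ ≤ (2 * max x 1) * (2 * exp (-x ^ 2 / 2)) :=
          mul_le_mul (natCeil_div_sqrt_le hN1 hx.le) hexp (by positivity) (by positivity)
      _ = 4 * max x 1 * exp (-x ^ 2 / 2) := by ring
  · have hzero : hN N x = 0 := by
      rw [hN, ← hs, prod_Icc_one_sub_div_eq_zero hNpos (by omega), mul_zero]
    rw [hzero]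
    positivity
end

section
/- With h_N defined by h_N(x) = (s/√N)·∏_{j=1}^{s-1}(1 - j/N) for x ∈ ((s-1)/√N, s/√N], one has pointwise convergence h_N(x) → x·exp(-x²/2) as N → ∞, for every x ∈ (0,∞). -/
/-!
Put `s = ⌈√N x⌉`, so that `s / √N → x`. Since `log (1 - u) = -u + O(u²)` and every
`u = j / N` with `j < s` is `O(1 / √N)`, the product `∏_{j<s} (1 - j/N)` is squeezed between
`exp (-(1 + 2s/N) σ)` and `exp (-σ)`, where `σ = s(s-1)/(2N) → x²/2`.
-/

open Filter

open Topology Finset Real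

theorem sum_Icc_one_natCast_sub_one (n : ℕ) :
    ∑ j ∈ Icc 1 (n - 1), (j : ℝ) = n * (n - 1) / 2 := by
  induction n with
  | zero => simp
  | succ n ih =>
    cases n with
    | zero => simp
    | succ n =>
      rw [Nat.add_sub_cancel, sum_Icc_succ_top (by omega), ← Nat.add_sub_cancel (n := n) (m := 1),
        ih]
      push_cast
      ring

theorem exp_neg_mul_le_one_sub {u m : ℝ} (hu : 0 ≤ u) (hum : u ≤ m) (hm : m ≤ 1 / 2) :
    exp (-(1 + 2 * m) * u) ≤ 1 - u := by
  have hlog : -u - 2 * u ^ 2 ≤ log (1 - u) := by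
    have h := abs_log_sub_add_sum_range_le (x := u) (by rw [abs_lt]; constructor <;> linarith) 1
    simp only [range_one, sum_singleton, abs_of_nonneg hu] at h
    have : u ^ 2 / (1 - u) ≤ 2 * u ^ 2 := by
      rw [div_le_iff₀ (by linarith)]
      nlinarith
    norm_num at h
    linarith [(abs_le.mp h).1]
  calc exp (-(1 + 2 * m) * u) ≤ exp (log (1 - u)) := exp_le_exp.mpr (by nlinarith)
    _ = 1 - u := exp_log (by linarith)

section

variable {ι : Type*} {s : Finset ι} {u : ι → ℝ}

theorem prod_one_sub_le_exp_neg_sum (hu : ∀ i ∈ s, u i ≤ 1) :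
    ∏ i ∈ s, (1 - u i) ≤ exp (-∑ i ∈ s, u i) := by
  rw [← sum_neg_distrib, exp_sum]
  refine prod_le_prod (fun i hi => sub_nonneg.mpr (hu i hi)) fun i _ => ?_
  linarith [add_one_le_exp (-u i)]

theorem exp_neg_mul_sum_le_prod_one_sub {m : ℝ} (hu : ∀ i ∈ s, 0 ≤ u i)
    (hum : ∀ i ∈ s, u i ≤ m) (hm : m ≤ 1 / 2) :
    exp (-(1 + 2 * m) * ∑ i ∈ s, u i) ≤ ∏ i ∈ s, (1 - u i) := by
  rw [mul_sum, exp_sum]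
  exact prod_le_prod (fun i _ => (exp_pos _).le)
    fun i hi => exp_neg_mul_le_one_sub (hu i hi) (hum i hi) hm

end

theorem tendsto_prod_one_sub_of_tendsto_sum {α ι : Type*} {l : Filter α} {I : α → Finset ι}
    {u : α → ι → ℝ} {m : α → ℝ} {σ : ℝ} (hu : ∀ a, ∀ i ∈ I a, 0 ≤ u a i)
    (hum : ∀ a, ∀ i ∈ I a, u a i ≤ m a) (hm : Tendsto m l (𝓝 0))
    (hσ : Tendsto (fun a => ∑ i ∈ I a, u a i) l (𝓝 σ)) :
    Tendsto (fun a => ∏ i ∈ I a, (1 - u a i)) l (𝓝 (exp (-σ))) := by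
  have hm_small : ∀ᶠ a in l, m a ≤ 1 / 2 := hm.eventually (ge_mem_nhds (by norm_num))
  have hlower :
      Tendsto (fun a => exp (-(1 + 2 * m a) * ∑ i ∈ I a, u a i)) l (𝓝 (exp (-σ))) := by
    simpa using (((tendsto_const_nhds (x := (1 : ℝ))).add (hm.const_mul 2)).neg.mul hσ).rexp
  refine tendsto_of_tendsto_of_tendsto_of_le_of_le' hlower hσ.neg.rexp ?_ ?_
  · filter_upwards [hm_small] with a ha
    exact exp_neg_mul_sum_le_prod_one_sub (hu a) (hum a) ha
  · filter_upwards [hm_small] with a ha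
    exact prod_one_sub_le_exp_neg_sum fun i hi => (hum a i hi).trans (by linarith)

theorem tendsto_prod_one_sub_div_of_div_sqrt {s : ℕ → ℕ} {x : ℝ}
    (hs : Tendsto (fun N : ℕ => (s N : ℝ) / √N) atTop (𝓝 x)) :
    Tendsto (fun N : ℕ => ∏ j ∈ Icc 1 (s N - 1), (1 - (j : ℝ) / N)) atTop
      (𝓝 (exp (-(x ^ 2 / 2)))) := by
  have hinv : Tendsto (fun N : ℕ => (√N)⁻¹) atTop (𝓝 0) :=
    tendsto_inv_atTop_zero.comp (tendsto_sqrt_atTop.comp tendsto_natCast_atTop_atTop)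
  have hsq (N : ℕ) : (N : ℝ) = √N ^ 2 := (sq_sqrt (Nat.cast_nonneg N)).symm
  have hmax : Tendsto (fun N : ℕ => (s N : ℝ) / N) atTop (𝓝 0) := by
    have hformula (N : ℕ) : s N / √N * (√N)⁻¹ = (s N : ℝ) / N := by
      conv_rhs => rw [hsq N]
      ring
    simpa using (hs.mul hinv).congr hformula
  have hsum : Tendsto (fun N : ℕ => ∑ j ∈ Icc 1 (s N - 1), (j : ℝ) / N) atTop
      (𝓝 (x ^ 2 / 2)) := by
    have hformula (N : ℕ) : ∑ j ∈ Icc 1 (s N - 1), (j : ℝ) / N =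
        ((s N / √N) ^ 2 - s N / √N * (√N)⁻¹) / 2 := by
      rw [← sum_div, sum_Icc_one_natCast_sub_one]
      conv_lhs => rw [hsq N]
      ring
    simpa [hformula] using ((hs.pow 2).sub (hs.mul hinv)).div_const 2
  refine tendsto_prod_one_sub_of_tendsto_sum (fun N j _ => by positivity) (fun N j hj => ?_)
    hmax hsum
  have : j ≤ s N := (mem_Icc.mp hj).2.trans (Nat.sub_le _ _)
  gcongr

/-- For every `x > 0`, `h_N(x) → x e^{-x²/2}` as `N → ∞`. -/
theorem hN_tendsto (x : ℝ) (hx : 0 < x) :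
    Tendsto (fun N : ℕ => hN N x) atTop (nhds (x * Real.exp (-x ^ 2 / 2))) := by
  have hratio : Tendsto (fun N : ℕ => (⌈√N * x⌉₊ : ℝ) / √N) atTop (𝓝 x) := by
    have h := (tendsto_nat_ceil_mul_div_atTop hx.le).comp
      (tendsto_sqrt_atTop.comp tendsto_natCast_atTop_atTop)
    simpa only [Function.comp_def, mul_comm x] using h
  rw [neg_div]
  exact hratio.mul (tendsto_prod_one_sub_div_of_div_sqrt hratio)
end

section
/- Fix an r-neighbor n-state rule f and spatial period σ. If the evolution started from the σ-periodic configuration L^∞ returns to L^∞ at time τ (minimal), then the temporal period τ of this periodic solution satisfies: τ = d·ℓ where ℓ is the length of the corresponding cycle of equivalence classes (words modulo circular shift) and d divides σ. In particular, ℓ divides τ and τ/ℓ divides σ. -/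
/-- Circular shift by `ℓ` of a word of length `σ`. -/
def rot (n σ : ℕ) (ℓ : ZMod σ) (w : ZMod σ → Fin n) : ZMod σ → Fin n :=
  fun i => w (i + ℓ)

/-- One update of the rule `f` on `σ`-periodic configurations viewed as words of
length `σ` with cyclic indices: `(step f A)_i = f(a_{i-r+1}, ..., a_i)`. -/
def step (r n σ : ℕ) (f : (Fin r → Fin n) → Fin n)
    (A : ZMod σ → Fin n) : ZMod σ → Fin n :=
  fun i => f (fun j => A (i - ((r - 1 : ℕ) : ZMod σ) + (j : ZMod σ)))

lemma rot_rot (n σ : ℕ) (a b : ZMod σ) (A : ZMod σ → Fin n) :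
    rot n σ a (rot n σ b A) = rot n σ (b + a) A := by
  funext i
  simp only [rot]
  congr 1
  ring

lemma rot_zero (n σ : ℕ) (A : ZMod σ → Fin n) : rot n σ 0 A = A := by
  funext i; simp [rot]

lemma step_rot (r n σ : ℕ) (f : (Fin r → Fin n) → Fin n) (m : ZMod σ)
    (A : ZMod σ → Fin n) :
    step r n σ f (rot n σ m A) = rot n σ m (step r n σ f A) := by
  funext i
  simp only [step, rot]
  congr 1
  funext j
  congr 1
  ring

lemma iterate_step_rot (r n σ : ℕ) (f : (Fin r → Fin n) → Fin n) (m : ZMod σ)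
    (t : ℕ) (A : ZMod σ → Fin n) :
    (step r n σ f)^[t] (rot n σ m A) = rot n σ m ((step r n σ f)^[t] A) := by
  induction t generalizing A with
  | zero => simp
  | succ k ih =>
    rw [Function.iterate_succ_apply, Function.iterate_succ_apply, step_rot, ih]

/-- If the evolution of an `r`-neighbor `n`-state rule started from a `σ`-periodic word `A`
first returns to `A` at time `τ`, and first returns to the equivalence class of `A` (words
modulo circular shift) at time `ℓ`, then `τ = d·ℓ` for some divisor `d` of `σ`; in
particular `ℓ ∣ τ` and `τ/ℓ ∣ σ`. -/
theorem temporal_period_structure (r n σ : ℕ) (hσ : 0 < σ)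
    (f : (Fin r → Fin n) → Fin n) (A : ZMod σ → Fin n) (τ ℓ : ℕ)
    (hτpos : 0 < τ) (hτ : (step r n σ f)^[τ] A = A)
    (hτmin : ∀ t, 0 < t → t < τ → (step r n σ f)^[t] A ≠ A)
    (hℓpos : 0 < ℓ) (hℓ : ∃ m : ZMod σ, (step r n σ f)^[ℓ] A = rot n σ m A)
    (hℓmin : ∀ t, 0 < t → t < ℓ → ¬∃ m : ZMod σ, (step r n σ f)^[t] A = rot n σ m A) :
    ∃ d : ℕ, d ∣ σ ∧ τ = d * ℓ ∧ ℓ ∣ τ ∧ τ / ℓ ∣ σ := by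
  obtain ⟨m, hm⟩ := hℓ
  -- iterates of multiples of ℓ are rotations
  have key : ∀ k : ℕ, (step r n σ f)^[k * ℓ] A = rot n σ (k • m) A := by
    intro k
    induction k with
    | zero => simp [rot_zero]
    | succ k ih =>
      have : (k + 1) * ℓ = k * ℓ + ℓ := by ring
      rw [this, Function.iterate_add_apply, hm, iterate_step_rot, ih, rot_rot,
        succ_nsmul]
  -- cancel rotations
  have rot_cancel : ∀ (a : ZMod σ) (X Y : ZMod σ → Fin n),
      rot n σ a X = Y → X = rot n σ (-a) Y := by
    intro a X Y h
    rw [← h, rot_rot, add_neg_cancel, rot_zero]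
  -- ℓ divides τ
  set q := τ / ℓ with hq
  have hmod : q * ℓ + τ % ℓ = τ := by
    rw [hq, mul_comm]; exact Nat.div_add_mod τ ℓ
  have hs0 : τ % ℓ = 0 := by
    by_contra hs
    have hspos : 0 < τ % ℓ := Nat.pos_of_ne_zero hs
    have hslt : τ % ℓ < ℓ := Nat.mod_lt _ hℓpos
    apply hℓmin (τ % ℓ) hspos hslt
    have : (step r n σ f)^[τ % ℓ + q * ℓ] A = A := by
      rw [Nat.add_comm, hmod]; exact hτ
    rw [Function.iterate_add_apply, key, iterate_step_rot] at this
    exact ⟨-(q • m), rot_cancel _ _ _ this⟩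
  have hτeq : τ = q * ℓ := (Nat.div_mul_cancel (Nat.dvd_of_mod_eq_zero hs0)).symm
  have hqpos : 0 < q := by
    rcases Nat.eq_zero_or_pos q with h | h
    · rw [h, zero_mul] at hτeq; omega
    · exact h
  -- any 0 < k < q with rot (k • m) A = A contradicts minimality of τ
  have hqmin : ∀ k : ℕ, 0 < k → k < q → rot n σ (k • m) A ≠ A := by
    intro k hk hkq hrot
    exact hτmin (k * ℓ) (Nat.mul_pos hk hℓpos)
      (by rw [hτeq]; exact (Nat.mul_lt_mul_right hℓpos).mpr hkq)
      (by rw [key]; exact hrot)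
  -- σ • m = 0 kills the rotation
  have hσrot : rot n σ (σ • m) A = A := by
    have : (σ • m : ZMod σ) = 0 := by
      rw [nsmul_eq_mul, ZMod.natCast_self, zero_mul]
    rw [this, rot_zero]
  -- multiples of q are fine
  have hmulq : ∀ u : ℕ, rot n σ ((q * u) • m) A = A := by
    intro u
    induction u with
    | zero => simp [rot_zero]
    | succ u ih =>
      have h1 : q * (u + 1) = q * u + q := by ring
      have h2 : rot n σ (q • m) A = A := by rw [← key, ← hτeq]; exact hτ
      rw [h1, add_nsmul, ← rot_rot, ih, h2]
  -- q divides σ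
  have hqdvd : q ∣ σ := by
    have hmodσ : q * (σ / q) + σ % q = σ := Nat.div_add_mod σ q
    have e : (σ : ℕ) • m = (q * (σ / q)) • m + (σ % q) • m := by
      rw [← add_nsmul, hmodσ]
    have hsrot : rot n σ ((σ % q) • m) A = A := by
      have := hσrot
      rw [e, ← rot_rot, hmulq (σ / q)] at this
      exact this
    rcases Nat.eq_zero_or_pos (σ % q) with h | h
    · exact Nat.dvd_of_mod_eq_zero h
    · exact absurd hsrot (hqmin _ h (Nat.mod_lt _ hqpos))
  exact ⟨q, hqdvd, hτeq, ⟨q, by rw [hτeq, mul_comm]⟩, hqdvd⟩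
end
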